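/- arXiv:chao-dyn/9605005 — 2 statements merged into one kernel-verified Lean document; each statement's English description precedes it below -/
import Mathlib

section
/- Fix L > 0, m ∈ ℕ, k ∈ [0, 1/L)^m, α, γ ∈ (ℤ/L)^m, η ∈ ℝ^m, ξ ∈ (ℤ/L)^m and t ∈ ℝ. Set E_α^{(k)} := |α + k|²/2 and E_γ^{(k)} := |γ + k|²/2 (the eigenvalues of the free Schrödinger operator H_m = −(1/(8π²))Δ on e_α^{(k)} and e_γ^{(k)}). Then e^{2πi t E_α^{(k)}} · e^{−2πi t E_γ^{(k)}} · ⟨e_α^{(k)}, T(η,ξ) e_γ^{(k)}⟩ = ⟨e_α^{(k)}, T(η + ξt, ξ) e_γ^{(k)}⟩, where ⟨f,g⟩ := ∫_{[-L/2,L/2)^m} conj(f(x)) g(x) dx. (This is the matrix-element form of the exact Egorov theorem, Lemma 4.1: e^{2πitH_m} Op(c) e^{−2πitH_m} = Op(c ∘ φ_t) for the free flow φ_t(p,q) = (p, q + pt).) -/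
open MeasureTheory

/-- The Weyl–Heisenberg operator `T(η,ξ)` on functions `f : ℝ^m → ℂ`,
`(T(η,ξ)f)(x) = e^{2πi ξ·(η/2 + x)} f(x + η)` (units with `ℏ = 1/(2π)`). -/
noncomputable def WeylT {m : ℕ} (η ξ : Fin m → ℝ) (f : (Fin m → ℝ) → ℂ) :
    (Fin m → ℝ) → ℂ :=
  fun x => Complex.exp (2 * Real.pi * Complex.I * (∑ i, ξ i * (η i / 2 + x i))) * f (x + η)

/-- The Bloch–Fourier basis vector `e_α^{(k)}(x) = L^{-m/2} e^{2πi (α+k)·x}`. -/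
noncomputable def blochBasis (L : ℝ) {m : ℕ} (α k : Fin m → ℝ) : (Fin m → ℝ) → ℂ :=
  fun x => ((L ^ (-(m : ℝ) / 2) : ℝ) : ℂ) *
    Complex.exp (2 * Real.pi * Complex.I * (∑ i, (α i + k i) * x i))

/-- The `L²` pairing over the fundamental domain `[-L/2, L/2)^m`. -/
noncomputable def boxInner (L : ℝ) {m : ℕ} (f g : (Fin m → ℝ) → ℂ) : ℂ :=
  ∫ x in Set.univ.pi (fun _ : Fin m => Set.Ico (-L / 2) (L / 2)),
    (starRingEnd ℂ) (f x) * g x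

/-! The integrand of `⟨e_α^{(k)}, T(η,ξ) e_γ^{(k)}⟩` is a constant phase times a product of
one-variable exponentials `e^{2πi(ξᵢ+γᵢ-αᵢ)xᵢ}`, so the box integral factors. A factor with
`αᵢ ≠ γᵢ + ξᵢ` integrates an exponential with nonzero frequency in `ℤ/L` over a full period and
vanishes, killing both sides. Otherwise `α = γ + ξ`, and the energy difference
`E_α - E_γ = ξ·(γ+k) + |ξ|²/2` is exactly the change of the Weyl phase `ξ·η/2 + (γ+k)·η`
under `η ↦ η + ξt`. -/

open Complex Finset Set
open scoped Real

theorem setIntegral_univ_pi_prod {ι 𝕜 : Type*} [Fintype ι] [RCLike 𝕜] {E : ι → Type*}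
    [∀ i, MeasureSpace (E i)] [∀ i, SigmaFinite (volume : Measure (E i))]
    (s : (i : ι) → Set (E i)) (f : (i : ι) → E i → 𝕜) :
    ∫ x in univ.pi s, ∏ i, f i (x i) = ∏ i, ∫ x in s i, f i x := by
  rw [volume_pi, Measure.restrict_pi_pi, integral_fintype_prod_eq_prod]

theorem integral_exp_int_div_mul_eq_zero {L : ℝ} (hL : 0 < L) (a : ℝ) {n : ℤ} (hn : n ≠ 0) :
    ∫ x in Ico a (a + L), exp (2 * π * I * ((n / L : ℝ) * x)) = 0 := by
  set c : ℂ := 2 * π * I * (n / L : ℝ)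
  have hc : c ≠ 0 := by simp [c, Real.pi_ne_zero, hn, hL.ne']
  have hperiod : c * ((a + L : ℝ) : ℂ) = c * a + n * (2 * π * I) := by
    have : (L : ℂ) ≠ 0 := ofReal_ne_zero.mpr hL.ne'
    simp only [c]; push_cast; field_simp
  simp_rw [← mul_assoc]
  rw [Measure.restrict_congr_set Ico_ae_eq_Ioc, ← intervalIntegral.integral_of_le (by linarith),
    integral_exp_mul_complex hc, hperiod, exp_add, exp_int_mul_two_pi_mul_I, mul_one, sub_self,
    zero_div]

theorem conj_blochBasis_mul_weylT (L : ℝ) {m : ℕ} (α γ k η ξ x : Fin m → ℝ) :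
    starRingEnd ℂ (blochBasis L α k x) * WeylT η ξ (blochBasis L γ k) x =
      ((L ^ (-(m : ℝ) / 2) : ℝ) : ℂ) ^ 2 *
        exp (2 * π * I * ∑ i, (ξ i * (η i / 2) + (γ i + k i) * η i)) *
        ∏ i, exp (2 * π * I * ((ξ i + γ i - α i) * x i)) := by
  have hreal : -(∑ i, (α i + k i) * x i) + ∑ i, ξ i * (η i / 2 + x i) +
      ∑ i, (γ i + k i) * (x + η) i =
      ∑ i, (ξ i * (η i / 2) + (γ i + k i) * η i) + ∑ i, (ξ i + γ i - α i) * x i := by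
    simp only [← sum_neg_distrib, ← sum_add_distrib]
    exact sum_congr rfl fun i _ => by simp only [Pi.add_apply]; ring
  calc _ = ((L ^ (-(m : ℝ) / 2) : ℝ) : ℂ) ^ 2 * exp (starRingEnd ℂ (2 * π * I *
        ∑ i, (α i + k i) * x i) + 2 * π * I * ∑ i, ξ i * (η i / 2 + x i) +
        2 * π * I * ∑ i, (γ i + k i) * (x + η) i) := by
        simp only [blochBasis, WeylT, map_mul, conj_ofReal, ← exp_conj, exp_add]
        ring
    _ = _ := by
        rw [← exp_sum, mul_assoc (_ ^ 2), ← exp_add]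
        congr 2
        have := congrArg (fun r : ℝ => 2 * π * I * (r : ℂ)) hreal
        simp only [map_mul, conj_ofReal, conj_I, map_ofNat, ← mul_sum]
        push_cast at this ⊢
        linear_combination this

theorem boxInner_blochBasis_weylT (L : ℝ) {m : ℕ} (α γ k η ξ : Fin m → ℝ) :
    boxInner L (blochBasis L α k) (WeylT η ξ (blochBasis L γ k)) =
      ((L ^ (-(m : ℝ) / 2) : ℝ) : ℂ) ^ 2 *
        exp (2 * π * I * ∑ i, (ξ i * (η i / 2) + (γ i + k i) * η i)) *
        ∏ i, ∫ x in Ico (-L / 2) (L / 2), exp (2 * π * I * ((ξ i + γ i - α i) * x)) := by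
  simp only [boxInner, conj_blochBasis_mul_weylT]
  rw [integral_const_mul, setIntegral_univ_pi_prod (fun _ => Ico (-L / 2) (L / 2))
    (fun i x => exp (2 * π * I * ((ξ i + γ i - α i) * x)))]

theorem exp_energy_mul_exp_weylPhase {m : ℕ} {α γ ξ : Fin m → ℝ} (hα : ∀ i, α i = γ i + ξ i)
    (k η : Fin m → ℝ) (t : ℝ) :
    exp (2 * π * I * t * ((∑ i, (α i + k i) ^ 2) / 2 : ℝ)) *
        exp (-(2 * π * I * t * ((∑ i, (γ i + k i) ^ 2) / 2 : ℝ))) *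
        exp (2 * π * I * ∑ i, (ξ i * (η i / 2) + (γ i + k i) * η i)) =
      exp (2 * π * I * ∑ i, (ξ i * ((η i + ξ i * t) / 2) + (γ i + k i) * (η i + ξ i * t))) := by
  have hreal : t * ((∑ i, (α i + k i) ^ 2) / 2) - t * ((∑ i, (γ i + k i) ^ 2) / 2) +
      ∑ i, (ξ i * (η i / 2) + (γ i + k i) * η i) =
      ∑ i, (ξ i * ((η i + ξ i * t) / 2) + (γ i + k i) * (η i + ξ i * t)) := by
    simp only [hα, sum_div, mul_sum, ← sum_sub_distrib, ← sum_add_distrib]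
    exact sum_congr rfl fun i _ => by ring
  have := congrArg (fun r : ℝ => 2 * π * I * (r : ℂ)) hreal
  rw [← exp_add, ← exp_add]
  congr 1
  push_cast at this ⊢
  linear_combination this

theorem egorov_matrix_elements_general (L : ℝ) (hL : 0 < L) (m : ℕ)
    (k : Fin m → ℝ) (jα jγ jξ : Fin m → ℤ) (η : Fin m → ℝ) (t : ℝ)
    (α : Fin m → ℝ) (hα : α = fun i => (jα i : ℝ) / L)
    (γ : Fin m → ℝ) (hγ : γ = fun i => (jγ i : ℝ) / L)
    (ξ : Fin m → ℝ) (hξ : ξ = fun i => (jξ i : ℝ) / L)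
    (Eα Eγ : ℝ) (hEα : Eα = (∑ i, (α i + k i) ^ 2) / 2)
    (hEγ : Eγ = (∑ i, (γ i + k i) ^ 2) / 2) :
    Complex.exp (2 * Real.pi * Complex.I * t * Eα) *
        Complex.exp (-(2 * Real.pi * Complex.I * t * Eγ)) *
        boxInner L (blochBasis L α k) (WeylT η ξ (blochBasis L γ k)) =
      boxInner L (blochBasis L α k)
        (WeylT (fun i => η i + ξ i * t) ξ (blochBasis L γ k)) := by
  subst hEα hEγ
  simp only [boxInner_blochBasis_weylT]
  by_cases hfreq : ∀ i, α i = γ i + ξ i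
  · rw [← exp_energy_mul_exp_weylPhase hfreq k η t]
    ring
  obtain ⟨i, hi⟩ := not_forall.mp hfreq
  have hfreq_int : ξ i + γ i - α i = ((jξ i + jγ i - jα i : ℤ) : ℝ) / L := by
    subst hα hγ hξ; push_cast; ring
  have hn : jξ i + jγ i - jα i ≠ 0 := by
    intro h
    rw [h, Int.cast_zero, zero_div] at hfreq_int
    exact hi (by linarith)
  have hfactor := integral_exp_int_div_mul_eq_zero hL (-L / 2) hn
  rw [← hfreq_int, show -L / 2 + L = L / 2 by ring] at hfactor
  push_cast at hfactor
  rw [prod_eq_zero (mem_univ i) hfactor, mul_zero, mul_zero, mul_zero]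

/-- matrix-element form of the exact Egorov theorem. With
`E_α^{(k)} = |α+k|²/2` the eigenvalues of `H_m = -(1/(8π²))Δ` on `e_α^{(k)}`,
`e^{2πitE_α^{(k)}} e^{-2πitE_γ^{(k)}} ⟨e_α^{(k)}, T(η,ξ) e_γ^{(k)}⟩
  = ⟨e_α^{(k)}, T(η+ξt, ξ) e_γ^{(k)}⟩`. -/
theorem egorov_matrix_elements (L : ℝ) (hL : 0 < L) (m : ℕ)
    (k : Fin m → ℝ) (hk : ∀ i, k i ∈ Set.Ico (0 : ℝ) (1 / L))
    (jα jγ jξ : Fin m → ℤ) (η : Fin m → ℝ) (t : ℝ)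
    (α : Fin m → ℝ) (hα : α = fun i => (jα i : ℝ) / L)
    (γ : Fin m → ℝ) (hγ : γ = fun i => (jγ i : ℝ) / L)
    (ξ : Fin m → ℝ) (hξ : ξ = fun i => (jξ i : ℝ) / L)
    (Eα Eγ : ℝ) (hEα : Eα = (∑ i, (α i + k i) ^ 2) / 2)
    (hEγ : Eγ = (∑ i, (γ i + k i) ^ 2) / 2) :
    Complex.exp (2 * Real.pi * Complex.I * t * Eα) *
        Complex.exp (-(2 * Real.pi * Complex.I * t * Eγ)) *
        boxInner L (blochBasis L α k) (WeylT η ξ (blochBasis L γ k)) =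
      boxInner L (blochBasis L α k)
        (WeylT (fun i => η i + ξ i * t) ξ (blochBasis L γ k)) :=
  egorov_matrix_elements_general L hL m k jα jγ jξ η t α hα γ hγ ξ hξ Eα Eγ hEα hEγ
end

section
/- Fix β > 0, n ∈ ℕ, and let β_fn : ℝ^n × ℝ^n → ℂ be C^∞ with compact support. Set γ_∞ := β_fn *_∞ Φ_∞^n. Then ∫_{ℝ^n} ∫_{ℝ^n} γ_∞(p,q) dq dμ̆^n(p) = ∫_{ℝ^n} ∫_{ℝ^n} β_fn(p,q) dq dμ̆^n(p). (Lemma 4.3, second claim.) -/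
open MeasureTheory
open scoped Convolution

/-- The Maxwellian probability measure `μ̆` on `ℝ`, with density `(β/π)^{1/2} e^{-βp²}`. -/
noncomputable def maxwellMeasure (β : ℝ) : Measure ℝ :=
  volume.withDensity fun p => ENNReal.ofReal (Real.sqrt (β / Real.pi) * Real.exp (-β * p ^ 2))

/-- The Gaussian `υ(q) = (4π/β)^{1/2} e^{-(4π²/β) q²}`. -/
noncomputable def upsilon (β q : ℝ) : ℝ :=
  Real.sqrt (4 * Real.pi / β) * Real.exp (-(4 * Real.pi ^ 2 / β) * q ^ 2)

/-- The limiting kernel `Φ_∞(p,q) = e^{βp²} e^{4πipq} υ(q)`. -/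
noncomputable def PhiInf (β : ℝ) (p q : ℝ) : ℂ :=
  (Real.exp (β * p ^ 2) : ℝ) * Complex.exp (4 * Real.pi * Complex.I * p * q) *
    (upsilon β q : ℝ)

/-- `Φ_∞^n(p,q) = ∏_{i=1}^n Φ_∞(p_i,q_i)`. -/
noncomputable def PhiInfN (β : ℝ) (n : ℕ) (p q : Fin n → ℝ) : ℂ :=
  ∏ i, PhiInf β (p i) (q i)

/-- Ordinary convolution in the `q`-variable:
`(F *_∞ G)(p,q) = ∫_{ℝ^n} F(p,y) G(p, q−y) dy`. -/
noncomputable def convInf {n : ℕ} (F G : (Fin n → ℝ) → (Fin n → ℝ) → ℂ)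
    (p q : Fin n → ℝ) : ℂ :=
  ∫ y : Fin n → ℝ, F p y * G p (q - y)

lemma phiInf_eq (β : ℝ) (p q : ℝ) :
    PhiInf β p q = ((Real.exp (β * p ^ 2) * Real.sqrt (4 * Real.pi / β) : ℝ) : ℂ) *
      (Complex.exp (Complex.I * ((4 * Real.pi * p : ℝ) : ℂ) * (q : ℂ)) *
        Complex.exp (-((4 * Real.pi ^ 2 / β : ℝ) : ℂ) * (q : ℂ) ^ 2)) := by
  unfold PhiInf upsilon
  push_cast
  rw [mul_comm (Real.sqrt (4 * Real.pi / β) : ℂ)]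
  ring_nf

lemma phiInf_integrable (β : ℝ) (hβ : 0 < β) (p : ℝ) :
    Integrable (fun q : ℝ => PhiInf β p q) := by
  have hb : (0 : ℝ) < ((4 * Real.pi ^ 2 / β : ℝ) : ℂ).re := by
    simp only [Complex.ofReal_re]
    positivity
  have h := (integrable_cexp_quadratic hb (Complex.I * ((4 * Real.pi * p : ℝ) : ℂ)) 0).const_mul
    ((Real.exp (β * p ^ 2) * Real.sqrt (4 * Real.pi / β) : ℝ) : ℂ)
  refine h.congr (Filter.Eventually.of_forall fun q => ?_)
  show _ = PhiInf β p q
  rw [phiInf_eq, ← Complex.exp_add]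
  ring_nf

lemma integral_phiInf (β : ℝ) (hβ : 0 < β) (p : ℝ) : ∫ q : ℝ, PhiInf β p q = 1 := by
  have hb : (0 : ℝ) < ((4 * Real.pi ^ 2 / β : ℝ) : ℂ).re := by
    simp only [Complex.ofReal_re]; positivity
  have key := fourierIntegral_gaussian hb ((4 * Real.pi * p : ℝ) : ℂ)
  simp_rw [phiInf_eq β p, integral_const_mul, key]
  have hπ : Real.pi ≠ 0 := Real.pi_ne_zero
  have hπc : (Real.pi : ℂ) ≠ 0 := Complex.ofReal_ne_zero.mpr hπ
  have hβc : (β : ℂ) ≠ 0 := Complex.ofReal_ne_zero.mpr hβ.ne'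
  have h1 : (Real.pi : ℂ) / ((4 * Real.pi ^ 2 / β : ℝ) : ℂ) = ((β / (4 * Real.pi) : ℝ) : ℂ) := by
    push_cast
    field_simp
  have h2 : (((β / (4 * Real.pi) : ℝ)) : ℂ) ^ (1 / 2 : ℂ) =
      ((Real.sqrt (β / (4 * Real.pi)) : ℝ) : ℂ) := by
    rw [Real.sqrt_eq_rpow, Complex.ofReal_cpow (by positivity)]
    norm_num
  have h3 : -((4 * Real.pi * p : ℝ) : ℂ) ^ 2 / (4 * ((4 * Real.pi ^ 2 / β : ℝ) : ℂ)) =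
      ((-(β * p ^ 2) : ℝ) : ℂ) := by
    push_cast
    field_simp
  rw [h1, h2, h3, ← Complex.ofReal_exp]
  norm_cast
  have hs : Real.sqrt (4 * Real.pi / β) * Real.sqrt (β / (4 * Real.pi)) = 1 := by
    rw [← Real.sqrt_mul (by positivity),
      show 4 * Real.pi / β * (β / (4 * Real.pi)) = 1 by field_simp]
    exact Real.sqrt_one
  calc Real.exp (β * p ^ 2) * Real.sqrt (4 * Real.pi / β) *
        (Real.sqrt (β / (4 * Real.pi)) * Real.exp (-(β * p ^ 2)))
      = (Real.exp (β * p ^ 2) * Real.exp (-(β * p ^ 2))) *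
        (Real.sqrt (4 * Real.pi / β) * Real.sqrt (β / (4 * Real.pi))) := by ring
    _ = 1 := by rw [← Real.exp_add, hs]; simp

lemma phiInfN_integrable (β : ℝ) (hβ : 0 < β) (n : ℕ) (p : Fin n → ℝ) :
    Integrable (fun q : Fin n → ℝ => PhiInfN β n p q) := by
  unfold PhiInfN
  exact Integrable.fintype_prod (f := fun i => PhiInf β (p i)) fun i => phiInf_integrable β hβ _

lemma integral_phiInfN (β : ℝ) (hβ : 0 < β) (n : ℕ) (p : Fin n → ℝ) :
    ∫ q : Fin n → ℝ, PhiInfN β n p q = 1 := by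
  unfold PhiInfN
  rw [MeasureTheory.integral_fintype_prod_volume_eq_prod (f := fun i => PhiInf β (p i))]
  simp [integral_phiInf β hβ]

/-- Lemma 4.3, second claim: for `β_fn ∈ C_0^∞(ℝ^{2n})` and
`γ_∞ = β_fn *_∞ Φ_∞^n`,
`∫_{ℝ^n} ∫_{ℝ^n} γ_∞(p,q) dq dμ̆^n(p) = ∫_{ℝ^n} ∫_{ℝ^n} β_fn(p,q) dq dμ̆^n(p)`. -/
theorem conv_preserves_gibbs_integral (β : ℝ) (hβ : 0 < β) (n : ℕ)
    (βfn : (Fin n → ℝ) → (Fin n → ℝ) → ℂ)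
    (hsmooth : ContDiff ℝ (⊤ : ℕ∞) (fun x : (Fin n → ℝ) × (Fin n → ℝ) => βfn x.1 x.2))
    (hsupp : HasCompactSupport (fun x : (Fin n → ℝ) × (Fin n → ℝ) => βfn x.1 x.2)) :
    (∫ p, (∫ q : Fin n → ℝ, convInf βfn (PhiInfN β n) p q)
        ∂(Measure.pi fun _ : Fin n => maxwellMeasure β)) =
      ∫ p, (∫ q : Fin n → ℝ, βfn p q)
        ∂(Measure.pi fun _ : Fin n => maxwellMeasure β) := by
  refine integral_congr_ae (Filter.Eventually.of_forall fun p => ?_)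
  have hcont : Continuous fun y => βfn p y :=
    hsmooth.continuous.comp (Continuous.prodMk_right p)
  have hcs : HasCompactSupport fun y => βfn p y := by
    refine HasCompactSupport.intro (hsupp.image continuous_snd) fun y hy => ?_
    by_contra h
    exact hy ⟨(p, y), subset_tsupport _ h, rfl⟩
  have hf : Integrable (fun y => βfn p y) := hcont.integrable_of_hasCompactSupport hcs
  have hg : Integrable (fun q : Fin n → ℝ => PhiInfN β n p q) := phiInfN_integrable β hβ n p
  have hconv : (fun q => convInf βfn (PhiInfN β n) p q) =
      MeasureTheory.convolution (fun y => βfn p y) (fun q => PhiInfN β n p q)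
        (ContinuousLinearMap.mul ℂ ℂ) volume := by
    funext q
    simp [convInf, MeasureTheory.convolution_def]
  show (∫ q : Fin n → ℝ, convInf βfn (PhiInfN β n) p q) = ∫ q : Fin n → ℝ, βfn p q
  rw [hconv, MeasureTheory.integral_convolution (ContinuousLinearMap.mul ℂ ℂ) hf hg,
    integral_phiInfN β hβ n p]
  simp
end
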